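/- arXiv:0711.0573 — 5 statements merged into one kernel-verified Lean document; each statement's English description precedes it below -/
import Mathlib

section
/- Define sequences f, g, h, t : ℕ → ℕ by f(0)=1, g(0)=0, h(0)=1, t(0)=0, and for all m ≥ 0: g(2m+1) = 2·f(2m)·h(2m)^2, t(2m+1) = 2·h(2m)^3, f(2m+2) = 2·g(2m+1)^3, h(2m+2) = 2·g(2m+1)^2·t(2m+1), with f(2m+1)=h(2m+1)=0 and g(2m)=t(2m)=0. Then for all m, f(2m) = h(2m) = 2^((3^(2m)−1)/2) and g(2m+1) = t(2m+1) = 2^((3^(2m+1)−1)/2). -/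
lemma sg2_aux (n : ℕ) : (3 ^ (n + 1) - 1) / 2 = 3 * ((3 ^ n - 1) / 2) + 1 := by
  have h1 : 3 ^ n % 2 = 1 := Nat.pow_mod 3 n 2 ▸ by simp
  have h2 : 3 ^ (n + 1) = 3 * 3 ^ n := by ring
  have h3 : 1 ≤ 3 ^ n := Nat.one_le_pow _ _ (by norm_num)
  omega

theorem sg2_dimer_counts
    (f g h t : ℕ → ℕ)
    (hf0 : f 0 = 1) (hg0 : g 0 = 0) (hh0 : h 0 = 1) (ht0 : t 0 = 0)
    (hg : ∀ m : ℕ, g (2 * m + 1) = 2 * f (2 * m) * (h (2 * m)) ^ 2)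
    (ht : ∀ m : ℕ, t (2 * m + 1) = 2 * (h (2 * m)) ^ 3)
    (hf : ∀ m : ℕ, f (2 * m + 2) = 2 * (g (2 * m + 1)) ^ 3)
    (hh : ∀ m : ℕ, h (2 * m + 2) = 2 * (g (2 * m + 1)) ^ 2 * t (2 * m + 1))
    (hfodd : ∀ m : ℕ, f (2 * m + 1) = 0) (hhodd : ∀ m : ℕ, h (2 * m + 1) = 0)
    (hgeven : ∀ m : ℕ, g (2 * m) = 0) (hteven : ∀ m : ℕ, t (2 * m) = 0) :
    ∀ m : ℕ, f (2 * m) = 2 ^ ((3 ^ (2 * m) - 1) / 2) ∧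
      h (2 * m) = 2 ^ ((3 ^ (2 * m) - 1) / 2) ∧
      g (2 * m + 1) = 2 ^ ((3 ^ (2 * m + 1) - 1) / 2) ∧
      t (2 * m + 1) = 2 ^ ((3 ^ (2 * m + 1) - 1) / 2) := by
  intro m
  induction m with
  | zero =>
    refine ⟨by simpa using hf0, by simpa using hh0, ?_, ?_⟩
    · rw [hg 0, hf0, hh0]; norm_num
    · rw [ht 0, hh0]; norm_num
  | succ k ih =>
    obtain ⟨ihf, ihh, ihg, iht⟩ := ih
    have e1 : (3 ^ (2 * k + 2) - 1) / 2 = 3 * ((3 ^ (2 * k + 1) - 1) / 2) + 1 :=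
      sg2_aux (2 * k + 1)
    have e2 : (3 ^ (2 * k + 3) - 1) / 2 = 3 * ((3 ^ (2 * k + 2) - 1) / 2) + 1 :=
      sg2_aux (2 * k + 2)
    have hF : f (2 * (k + 1)) = 2 ^ ((3 ^ (2 * (k + 1)) - 1) / 2) := by
      have := hf k
      rw [ihg] at this
      rw [show 2 * (k + 1) = 2 * k + 2 by ring, this, e1, ← pow_mul, ← pow_succ']
      congr 1; ring
    have hH : h (2 * (k + 1)) = 2 ^ ((3 ^ (2 * (k + 1)) - 1) / 2) := by
      have := hh k
      rw [ihg, iht] at this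
      rw [show 2 * (k + 1) = 2 * k + 2 by ring, this, e1, ← pow_mul, ← pow_succ',
        ← pow_add]
      ring_nf
    refine ⟨hF, hH, ?_, ?_⟩
    · rw [hg (k + 1), hF, hH, show 2 * (k + 1) + 1 = 2 * k + 3 by ring,
        show 2 * (k + 1) = 2 * k + 2 by ring, e2, ← pow_mul, ← pow_succ', ← pow_add]
      ring_nf
    · rw [ht (k + 1), hH, show 2 * (k + 1) + 1 = 2 * k + 3 by ring,
        show 2 * (k + 1) = 2 * k + 2 by ring, e2, ← pow_mul, ← pow_succ']
      congr 1; ring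
end

section
/- Define g, t : ℕ → ℕ by g(1)=t(1)=6 and for n ≥ 1: g(n+1) = 6·g(n)^5·t(n), t(n+1) = 6·g(n)^4·t(n)^2. Then for all n ≥ 1, g(n) = t(n) = 6^((6^n−1)/5). -/
lemma pow6_div : ∀ n : ℕ, 5 ∣ 6 ^ n - 1 := by
  intro n
  induction n with
  | zero => simp
  | succ k ih =>
    obtain ⟨c, hc⟩ := ih
    have h1 : 1 ≤ 6 ^ k := Nat.one_le_pow _ _ (by norm_num)
    have : 6 ^ (k + 1) - 1 = 5 * (6 ^ k) + (6 ^ k - 1) := by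
      rw [pow_succ]; omega
    rw [this, hc]
    exact ⟨6 ^ k + c, by ring⟩

lemma exp_step (n : ℕ) : (6 ^ (n + 1) - 1) / 5 = 6 * ((6 ^ n - 1) / 5) + 1 := by
  obtain ⟨c, hc⟩ := pow6_div n
  have h1 : 1 ≤ 6 ^ n := Nat.one_le_pow _ _ (by norm_num)
  have h2 : 6 ^ (n + 1) = 6 * 6 ^ n := by rw [pow_succ]; ring
  omega

theorem sg23_dimer_counts
    (g t : ℕ → ℕ)
    (hg1 : g 1 = 6) (ht1 : t 1 = 6)
    (hg : ∀ n : ℕ, 1 ≤ n → g (n + 1) = 6 * (g n) ^ 5 * t n)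
    (ht : ∀ n : ℕ, 1 ≤ n → t (n + 1) = 6 * (g n) ^ 4 * (t n) ^ 2) :
    ∀ n : ℕ, 1 ≤ n → g n = 6 ^ ((6 ^ n - 1) / 5) ∧ t n = 6 ^ ((6 ^ n - 1) / 5) := by
  intro n hn
  induction n, hn using Nat.le_induction with
  | base => norm_num [hg1, ht1]
  | succ k hk ih =>
    obtain ⟨ihg, iht⟩ := ih
    rw [hg k hk, ht k hk, ihg, iht, exp_step]
    constructor <;> ring
end

section
/- Define f, h, s : ℕ → ℕ by f(0)=h(0)=1, s(0)=3, and f(n+1)=40·f(n)·h(n)^3·s(n)+24·h(n)^5, h(n+1)=24·f(n)·h(n)^2·s(n)^2+40·h(n)^4·s(n), s(n+1)=8·f(n)·h(n)·s(n)^3+56·h(n)^3·s(n)^2. Then for all n ≥ 1, h(n)^2 ≥ f(n)·s(n); moreover the real sequence α(n)=h(n)/f(n) is monotonically decreasing for n ≥ 1 and β(n)=s(n)/h(n) is monotonically increasing for n ≥ 1. -/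
theorem sg4_ratio_monotonicity
    (f h s : ℕ → ℕ)
    (hf0 : f 0 = 1) (hh0 : h 0 = 1) (hs0 : s 0 = 3)
    (hf : ∀ n : ℕ, f (n + 1) = 40 * f n * (h n) ^ 3 * s n + 24 * (h n) ^ 5)
    (hh : ∀ n : ℕ, h (n + 1) = 24 * f n * (h n) ^ 2 * (s n) ^ 2 + 40 * (h n) ^ 4 * s n)
    (hs : ∀ n : ℕ, s (n + 1) = 8 * f n * h n * (s n) ^ 3 + 56 * (h n) ^ 3 * (s n) ^ 2) :
    (∀ n : ℕ, 1 ≤ n → f n * s n ≤ (h n) ^ 2) ∧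
    (∀ n : ℕ, 1 ≤ n → (h (n + 1) : ℝ) / (f (n + 1) : ℝ) ≤ (h n : ℝ) / (f n : ℝ)) ∧
    (∀ n : ℕ, 1 ≤ n → (s n : ℝ) / (h n : ℝ) ≤ (s (n + 1) : ℝ) / (h (n + 1) : ℝ)) := by
  -- positivity
  have pos : ∀ n : ℕ, 0 < f n ∧ 0 < h n ∧ 0 < s n := by
    intro n
    induction n with
    | zero => simp [hf0, hh0, hs0]
    | succ m ih =>
      obtain ⟨pf, ph, ps⟩ := ih
      refine ⟨?_, ?_, ?_⟩
      · rw [hf]; positivity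
      · rw [hh]; positivity
      · rw [hs]; positivity
  -- key inequality at every successor index
  have key : ∀ n : ℕ, f (n + 1) * s (n + 1) ≤ (h (n + 1)) ^ 2 := by
    intro n
    have : (f (n + 1) : ℤ) * s (n + 1) ≤ ((h (n + 1) : ℤ)) ^ 2 := by
      have ef : (f (n + 1) : ℤ) = 40 * f n * (h n) ^ 3 * s n + 24 * (h n) ^ 5 := by
        exact_mod_cast congrArg (Nat.cast : ℕ → ℤ) (hf n)
      have eh : (h (n + 1) : ℤ) = 24 * f n * (h n) ^ 2 * (s n) ^ 2 + 40 * (h n) ^ 4 * s n := by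
        exact_mod_cast congrArg (Nat.cast : ℕ → ℤ) (hh n)
      have es : (s (n + 1) : ℤ) = 8 * f n * h n * (s n) ^ 3 + 56 * (h n) ^ 3 * (s n) ^ 2 := by
        exact_mod_cast congrArg (Nat.cast : ℕ → ℤ) (hs n)
      rw [ef, eh, es]
      nlinarith [sq_nonneg ((f n : ℤ) * s n - (h n) ^ 2), sq_nonneg ((h n : ℤ) ^ 2 * s n),
        mul_nonneg (mul_nonneg (sq_nonneg ((f n : ℤ) * s n - (h n) ^ 2))
          (sq_nonneg ((h n : ℤ) ^ 2))) (sq_nonneg (s n : ℤ))]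
    exact_mod_cast this
  have key' : ∀ n : ℕ, 1 ≤ n → f n * s n ≤ (h n) ^ 2 := by
    intro n hn
    obtain ⟨m, rfl⟩ := Nat.exists_eq_add_of_le hn
    simpa [Nat.add_comm] using key m
  refine ⟨key', ?_, ?_⟩
  · intro n hn
    obtain ⟨pf, ph, ps⟩ := pos n
    obtain ⟨pf', ph', ps'⟩ := pos (n + 1)
    have hk := key' n hn
    rw [div_le_div_iff₀ (by exact_mod_cast pf') (by exact_mod_cast pf)]
    have : h (n + 1) * f n ≤ h n * f (n + 1) := by
      rw [hh n, hf n]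
      nlinarith [Nat.mul_le_mul hk hk, sq_nonneg (h n), pf.le, ps.le, ph.le]
    exact_mod_cast this
  · intro n hn
    obtain ⟨pf, ph, ps⟩ := pos n
    obtain ⟨pf', ph', ps'⟩ := pos (n + 1)
    have hk := key' n hn
    rw [div_le_div_iff₀ (by exact_mod_cast ph) (by exact_mod_cast ph')]
    have : s n * h (n + 1) ≤ s (n + 1) * h n := by
      rw [hh n, hs n]
      nlinarith [Nat.mul_le_mul_right ((h n)^2 * (s n)^2) hk]
    exact_mod_cast this
end

section
/- Let c = 399/55 and let α : ℕ → ℝ satisfy α(n+1) = (c^3 + 63·c^2·α(n)^2 + 159·c·α(n)^4 + 33·α(n)^6) / (2·α(n)·(5·c^2 + 70·c·α(n)^2 + 53·α(n)^4)) for n ≥ 1, with α(1) = 44064/15840. Then for all n ≥ 1, α(n) ≥ √c, the sequence is monotonically decreasing, and α(n) → √c as n → ∞. -/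
open Filter

theorem sg5_ratio_decreasing_to_sqrt_c
    (α : ℕ → ℝ) (hα1 : α 1 = 44064 / 15840)
    (hα : ∀ n : ℕ, 1 ≤ n → α (n + 1) =
      ((399 / 55 : ℝ) ^ 3 + 63 * (399 / 55 : ℝ) ^ 2 * (α n) ^ 2 +
        159 * (399 / 55 : ℝ) * (α n) ^ 4 + 33 * (α n) ^ 6) /
      (2 * α n * (5 * (399 / 55 : ℝ) ^ 2 + 70 * (399 / 55 : ℝ) * (α n) ^ 2 +
        53 * (α n) ^ 4))) :
    (∀ n : ℕ, 1 ≤ n → Real.sqrt (399 / 55) ≤ α n) ∧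
    (∀ n : ℕ, 1 ≤ n → α (n + 1) ≤ α n) ∧
    Filter.Tendsto α Filter.atTop (nhds (Real.sqrt (399 / 55))) := by
  have hc0 : (0:ℝ) < 399 / 55 := by norm_num
  set s := Real.sqrt (399 / 55) with hs_def
  have hs2 : s ^ 2 = 399 / 55 := Real.sq_sqrt hc0.le
  have hs0 : 0 < s := Real.sqrt_pos.mpr hc0
  -- the quartic factor is nonnegative
  have hQ : ∀ t x : ℝ, 0 ≤ 33*x^4 - 40*t*x^3 + 46*t^2*x^2 - 8*t^3*x + t^4 := by
    intro t x
    nlinarith [sq_nonneg (33*x^2 - 20*t*x), sq_nonneg (1118*t*x - 132*t^2),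
      sq_nonneg (t*x), sq_nonneg t, sq_nonneg x, sq_nonneg (t^2)]
  -- lower bound
  have hlb : ∀ n : ℕ, 1 ≤ n → s ≤ α n := by
    intro n hn
    induction n with
    | zero => omega
    | succ m ih =>
      rcases Nat.lt_or_ge m 1 with hm | hm
      · interval_cases m
        rw [hα1]
        have h := Real.sqrt_le_sqrt (show (399/55 : ℝ) ≤ (44064/15840)^2 by norm_num)
        rwa [Real.sqrt_sq (by norm_num)] at h
      · have hx : s ≤ α m := ih hm
        have hx0 : 0 < α m := hs0.trans_le hx
        rw [hα m hm]
        set x := α m with hxdef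
        have hD : 0 < 2 * x * (5 * (399 / 55 : ℝ) ^ 2 + 70 * (399 / 55 : ℝ) * x ^ 2 +
            53 * x ^ 4) := by positivity
        rw [le_div_iff₀ hD]
        have key : (399 / 55 : ℝ) ^ 3 + 63 * (399 / 55 : ℝ) ^ 2 * x ^ 2 +
            159 * (399 / 55 : ℝ) * x ^ 4 + 33 * x ^ 6 -
            s * (2 * x * (5 * (399 / 55 : ℝ) ^ 2 + 70 * (399 / 55 : ℝ) * x ^ 2 +
              53 * x ^ 4)) =
            (x - s)^2 * (33*x^4 - 40*s*x^3 + 46*s^2*x^2 - 8*s^3*x + s^4) := by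
          rw [← hs2]; ring
        nlinarith [mul_nonneg (sq_nonneg (x - s)) (hQ s x), key]
  -- decreasing
  have hdec : ∀ n : ℕ, 1 ≤ n → α (n + 1) ≤ α n := by
    intro n hn
    have hx : s ≤ α n := hlb n hn
    have hx0 : 0 < α n := hs0.trans_le hx
    have hx2 : (399/55 : ℝ) ≤ (α n)^2 := by nlinarith [hs2]
    rw [hα n hn]
    set x := α n with hxdef
    have hD : 0 < 2 * x * (5 * (399 / 55 : ℝ) ^ 2 + 70 * (399 / 55 : ℝ) * x ^ 2 +
        53 * x ^ 4) := by positivity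
    rw [div_le_iff₀ hD]
    nlinarith [mul_nonneg (sub_nonneg.mpr hx2)
      (show (0:ℝ) ≤ 73*x^4 + 54*(399/55)*x^2 + (399/55)^2 by positivity)]
  -- convergence
  set β : ℕ → ℝ := fun n => α (n + 1) with hβdef
  have hanti : Antitone β := antitone_nat_of_succ_le (fun n => hdec (n + 1) (by omega))
  have hbdd : BddBelow (Set.range β) := ⟨s, by rintro y ⟨n, rfl⟩; exact hlb (n + 1) (by omega)⟩
  have htend : Tendsto β atTop (nhds (⨅ n, β n)) := tendsto_atTop_ciInf hanti hbdd
  set L := ⨅ n, β n with hLdef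
  have hsL : s ≤ L := le_ciInf (fun n => hlb (n + 1) (by omega))
  have hL0 : 0 < L := hs0.trans_le hsL
  have htend2 : Tendsto (fun n => β (n + 1)) atTop (nhds L) :=
    htend.comp (tendsto_add_atTop_nat 1)
  have hDL : (2 * L * (5 * (399 / 55 : ℝ) ^ 2 + 70 * (399 / 55 : ℝ) * L ^ 2 +
      53 * L ^ 4)) ≠ 0 := by positivity
  have hcont : ContinuousAt (fun x : ℝ =>
      ((399 / 55 : ℝ) ^ 3 + 63 * (399 / 55 : ℝ) ^ 2 * x ^ 2 +
        159 * (399 / 55 : ℝ) * x ^ 4 + 33 * x ^ 6) /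
      (2 * x * (5 * (399 / 55 : ℝ) ^ 2 + 70 * (399 / 55 : ℝ) * x ^ 2 +
        53 * x ^ 4))) L := by
    apply ContinuousAt.div
    · fun_prop
    · fun_prop
    · exact hDL
  have htendf : Tendsto (fun n =>
      ((399 / 55 : ℝ) ^ 3 + 63 * (399 / 55 : ℝ) ^ 2 * (β n) ^ 2 +
        159 * (399 / 55 : ℝ) * (β n) ^ 4 + 33 * (β n) ^ 6) /
      (2 * β n * (5 * (399 / 55 : ℝ) ^ 2 + 70 * (399 / 55 : ℝ) * (β n) ^ 2 +
        53 * (β n) ^ 4))) atTop (nhds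
      (((399 / 55 : ℝ) ^ 3 + 63 * (399 / 55 : ℝ) ^ 2 * L ^ 2 +
        159 * (399 / 55 : ℝ) * L ^ 4 + 33 * L ^ 6) /
      (2 * L * (5 * (399 / 55 : ℝ) ^ 2 + 70 * (399 / 55 : ℝ) * L ^ 2 +
        53 * L ^ 4)))) := hcont.tendsto.comp htend
  have heq : ∀ n : ℕ, β (n + 1) =
      ((399 / 55 : ℝ) ^ 3 + 63 * (399 / 55 : ℝ) ^ 2 * (β n) ^ 2 +
        159 * (399 / 55 : ℝ) * (β n) ^ 4 + 33 * (β n) ^ 6) /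
      (2 * β n * (5 * (399 / 55 : ℝ) ^ 2 + 70 * (399 / 55 : ℝ) * (β n) ^ 2 +
        53 * (β n) ^ 4)) := fun n => hα (n + 1) (by omega)
  have hfix : ((399 / 55 : ℝ) ^ 3 + 63 * (399 / 55 : ℝ) ^ 2 * L ^ 2 +
        159 * (399 / 55 : ℝ) * L ^ 4 + 33 * L ^ 6) /
      (2 * L * (5 * (399 / 55 : ℝ) ^ 2 + 70 * (399 / 55 : ℝ) * L ^ 2 +
        53 * L ^ 4)) = L :=
    tendsto_nhds_unique (htendf.congr (fun n => (heq n).symm)) htend2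
  have hNL : (399 / 55 : ℝ) ^ 3 + 63 * (399 / 55 : ℝ) ^ 2 * L ^ 2 +
      159 * (399 / 55 : ℝ) * L ^ 4 + 33 * L ^ 6 =
      L * (2 * L * (5 * (399 / 55 : ℝ) ^ 2 + 70 * (399 / 55 : ℝ) * L ^ 2 +
        53 * L ^ 4)) := (div_eq_iff hDL).mp hfix
  have hzero : (L ^ 2 - 399/55) * (73*L^4 + 54*(399/55 : ℝ)*L^2 + (399/55)^2) = 0 := by
    linear_combination -hNL
  have hP : (73*L^4 + 54*(399/55 : ℝ)*L^2 + (399/55)^2) ≠ 0 := by positivity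
  have hL2 : L ^ 2 = 399/55 := by
    have := (mul_eq_zero.mp hzero).resolve_right hP
    linarith
  have hLs : L = s := by
    rw [hs_def, ← hL2, Real.sqrt_sq hL0.le]
  refine ⟨hlb, hdec, ?_⟩
  have : Tendsto β atTop (nhds s) := hLs ▸ htend
  exact (Filter.tendsto_add_atTop_iff_nat 1).mp this
end

section
/- Let c = 399/55 and define ε(n) = α(n) − √c where α satisfies the recursion α(n+1) = (c^3 + 63c^2α(n)^2 + 159cα(n)^4 + 33α(n)^6)/(2α(n)(5c^2 + 70cα(n)^2 + 53α(n)^4)) with α(n) > √c for all n ≥ 1. Then ε(n+1) ≤ ε(n)^2, so ε(n) converges to 0 at least doubly exponentially; in particular ε(n+m) ≤ ε(m)^(2^n) for all n ≥ 0 whenever ε(m) ≤ 1. -/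
lemma sg5_key (s e : ℝ) (hs : 1 < s) (he : 0 < e) :
    ((s ^ 2) ^ 3 + 63 * (s ^ 2) ^ 2 * (s + e) ^ 2 +
      159 * (s ^ 2) * (s + e) ^ 4 + 33 * (s + e) ^ 6) /
    (2 * (s + e) * (5 * (s ^ 2) ^ 2 + 70 * (s ^ 2) * (s + e) ^ 2 +
      53 * (s + e) ^ 4)) - s ≤ e ^ 2 := by
  have hs0 : (0:ℝ) < s := lt_trans one_pos hs
  have hD : 0 < 2 * (s + e) * (5 * (s ^ 2) ^ 2 + 70 * (s ^ 2) * (s + e) ^ 2 +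
      53 * (s + e) ^ 4) := by positivity
  rw [sub_le_iff_le_add, div_le_iff₀ hD]
  nlinarith [mul_pos he hs0, pow_pos he 2, pow_pos he 3, pow_pos he 4,
    pow_pos he 5, pow_pos he 6, pow_pos he 7, pow_pos hs0 2, pow_pos hs0 3,
    pow_pos hs0 4, pow_pos hs0 5, sub_pos.mpr hs,
    mul_pos (mul_pos (pow_pos he 2) (pow_pos hs0 4)) (sub_pos.mpr hs),
    mul_pos (mul_pos (pow_pos he 3) (pow_pos hs0 3)) (sub_pos.mpr hs),
    mul_pos (mul_pos (pow_pos he 4) (pow_pos hs0 2)) (sub_pos.mpr hs),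
    mul_pos (mul_pos (pow_pos he 5) hs0) (sub_pos.mpr hs),
    mul_pos (pow_pos he 6) (sub_pos.mpr hs)]

theorem sg5_epsilon_convergence
    (α : ℕ → ℝ)
    (hα : ∀ n : ℕ, 1 ≤ n → α (n + 1) =
      ((399 / 55 : ℝ) ^ 3 + 63 * (399 / 55 : ℝ) ^ 2 * (α n) ^ 2 +
        159 * (399 / 55 : ℝ) * (α n) ^ 4 + 33 * (α n) ^ 6) /
      (2 * α n * (5 * (399 / 55 : ℝ) ^ 2 + 70 * (399 / 55 : ℝ) * (α n) ^ 2 +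
        53 * (α n) ^ 4)))
    (hgt : ∀ n : ℕ, 1 ≤ n → Real.sqrt (399 / 55) < α n)
    (ε : ℕ → ℝ) (hε : ∀ n : ℕ, ε n = α n - Real.sqrt (399 / 55)) :
    (∀ n : ℕ, 1 ≤ n → ε (n + 1) ≤ (ε n) ^ 2) ∧
    (∀ m : ℕ, 1 ≤ m → ε m ≤ 1 → ∀ n : ℕ, ε (n + m) ≤ (ε m) ^ (2 ^ n)) := by
  set s : ℝ := Real.sqrt (399 / 55) with hsdef
  have hs2 : s ^ 2 = 399 / 55 := Real.sq_sqrt (by norm_num)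
  have hs1 : 1 < s := by
    nlinarith [Real.sqrt_nonneg (399/55 : ℝ)]
  have key : ∀ n : ℕ, 1 ≤ n → ε (n + 1) ≤ (ε n) ^ 2 := by
    intro n hn
    have he : 0 < ε n := by rw [hε n]; linarith [hgt n hn]
    have han : α n = s + ε n := by rw [hε n]; ring
    have := sg5_key s (ε n) hs1 he
    rw [hε (n+1), hα n hn, han, hs2] at *
    rw [← hs2] at *
    linarith [sg5_key s (ε n) hs1 he]
  refine ⟨key, ?_⟩
  intro m hm hle n
  induction n with
  | zero => simp
  | succ n ih =>
    have hnm : 1 ≤ n + m := le_add_left hm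
    have hem : 0 < ε m := by rw [hε m]; linarith [hgt m hm]
    have hpos : 0 < ε (n + m) := by
      rw [hε (n + m)]; linarith [hgt (n + m) hnm]
    have h1 : ε (n + 1 + m) ≤ ε (n + m) ^ 2 := by
      have := key (n + m) hnm
      simpa [add_right_comm] using this
    have h2 : ε (n + m) ^ 2 ≤ (ε m ^ 2 ^ n) ^ 2 :=
      pow_le_pow_left₀ hpos.le ih 2
    calc ε (n + 1 + m) ≤ ε (n + m) ^ 2 := h1
      _ ≤ (ε m ^ 2 ^ n) ^ 2 := h2
      _ = ε m ^ 2 ^ (n + 1) := by rw [← pow_mul, pow_succ]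
end
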